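/- Let H be a 3-uniform hypergraph with no avoidable configuration (no connected subhypergraph with nullity ≥ 2 and at most 6 hyperedges), and let G be the graph obtained by replacing each hyperedge of H by a triangle. If G contains a triangle on a vertex set h which is not a hyperedge of H, then H contains a 'clean 3-cycle': three hyperedges h₁, h₂, h₃ such that each pair meets in exactly one vertex, these three intersection vertices are distinct and form the triangle h, and each hyperedge has one additional vertex, all distinct. -/

import Mathlib

/-- A (finite) hypergraph: a finite vertex set together with a finite set of hyperedges,
each a subset of the vertex set. -/
structure FinHypergraph (V : Type*) where
  verts : Finset V
  edges : Finset (Finset V)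
  subset_verts : ∀ e ∈ edges, e ⊆ verts

namespace FinHypergraph

variable {V : Type*}

/-- `H` is `r`-uniform: every hyperedge has exactly `r` vertices. -/
def Uniform (r : ℕ) (H : FinHypergraph V) : Prop := ∀ e ∈ H.edges, e.card = r

/-- The graph on the vertices in which two distinct vertices are adjacent iff they lie in a
common hyperedge. -/
def assoc (H : FinHypergraph V) : SimpleGraph V where
  Adj u v := u ≠ v ∧ ∃ e ∈ H.edges, u ∈ e ∧ v ∈ e
  symm := ⟨by
    rintro u v ⟨h1, e, he, hu, hv⟩
    exact ⟨h1.symm, e, he, hv, hu⟩⟩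
  loopless := ⟨by rintro u ⟨h1, -⟩; exact h1 rfl⟩

/-- The number of connected components of `H` (isolated vertices of `verts` count). -/
noncomputable def componentCount (H : FinHypergraph V) : ℕ :=
  Set.ncard ((fun v => H.assoc.connectedComponentMk v) '' ↑H.verts)

/-- The nullity `n(H) = (r-1)e(H) + c(H) - |H|` of an `r`-uniform hypergraph. -/
noncomputable def nullity (r : ℕ) (H : FinHypergraph V) : ℤ :=
  ((r : ℤ) - 1) * H.edges.card + H.componentCount - H.verts.card

/-- `H` is connected: nonempty, and any two vertices are joined by a path of hyperedges. -/
def Connected (H : FinHypergraph V) : Prop :=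
  H.verts.Nonempty ∧ ∀ u ∈ H.verts, ∀ v ∈ H.verts, H.assoc.Reachable u v

/-- The nullity `n(H) = (r-1)e(H) + 1 - |H|` of a connected `r`-uniform hypergraph. -/
def nullity1 (r : ℕ) (H : FinHypergraph V) : ℤ :=
  ((r : ℤ) - 1) * H.edges.card + 1 - H.verts.card

end FinHypergraph

/-!
Pick hyperedges `{x,y,a}`, `{y,z,b}`, `{z,x,c}` covering the three sides of the triangle
`{x,y,z}`. Since `{x,y,z}` is not a hyperedge, `a ≠ z`, `b ≠ x`, `c ≠ y`, so the three hyperedges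
are distinct, and they form a connected configuration. If two of `a, b, c` coincided, these
three hyperedges would span at most five vertices, giving nullity `2 · 3 + 1 - 5 = 2`: an
avoidable configuration.
-/

theorem List.card_toFinset_lt_length_of_not_nodup {α : Type*} [DecidableEq α] {l : List α}
    (h : ¬ l.Nodup) : l.toFinset.card < l.length :=
  (List.toFinset_card_le l).lt_of_ne fun h' =>
    h (Multiset.toFinset_card_eq_card_iff_nodup.1 h')

theorem Finset.exists_eq_insert_insert_of_card_eq_three {α : Type*} [DecidableEq α]
    {s : Finset α} (hs : s.card = 3) {x y : α} (hx : x ∈ s) (hy : y ∈ s) (hxy : x ≠ y) :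
    ∃ w, w ≠ x ∧ w ≠ y ∧ s = {x, y, w} := by
  have hy' : y ∈ s.erase x := mem_erase.2 ⟨hxy.symm, hy⟩
  obtain ⟨w, hw⟩ : ∃ w, (s.erase x).erase y = {w} := by
    rw [← card_eq_one, card_erase_of_mem hy', card_erase_of_mem hx, hs]
  have hw' : w ∈ (s.erase x).erase y := hw ▸ mem_singleton_self w
  refine ⟨w, ne_of_mem_erase (mem_of_mem_erase hw'), ne_of_mem_erase hw', ?_⟩
  rw [← hw, insert_erase hy', insert_erase hx]

namespace FinHypergraph

variable {V : Type*}

theorem Uniform.exists_insert_insert_mem_edges [DecidableEq V] {H : FinHypergraph V}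
    (hu : H.Uniform 3) {u v : V} (huv : u ≠ v) (h : ∃ e ∈ H.edges, u ∈ e ∧ v ∈ e) :
    ∃ w, w ≠ u ∧ w ≠ v ∧ {u, v, w} ∈ H.edges := by
  obtain ⟨e, he, hue, hve⟩ := h
  obtain ⟨w, hwu, hwv, rfl⟩ := Finset.exists_eq_insert_insert_of_card_eq_three (hu e he) hue hve huv
  exact ⟨w, hwu, hwv, he⟩

theorem reachable_of_mem_edge (H : FinHypergraph V) {e : Finset V} (he : e ∈ H.edges) {u v : V}
    (hu : u ∈ e) (hv : v ∈ e) : H.assoc.Reachable u v := by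
  rcases eq_or_ne u v with rfl | huv
  · rfl
  · exact SimpleGraph.Adj.reachable ⟨huv, e, he, hu, hv⟩

theorem connected_of_forall_reachable (H : FinHypergraph V) {v : V} (hv : v ∈ H.verts)
    (h : ∀ u ∈ H.verts, H.assoc.Reachable u v) : H.Connected :=
  ⟨⟨v, hv⟩, fun u hu w hw => (h u hu).trans (h w hw).symm⟩

variable [DecidableEq V]

def spanned (E : Finset (Finset V)) : FinHypergraph V :=
  ⟨E.sup id, E, fun _ he => Finset.le_sup (f := id) he⟩

theorem mem_spanned_verts {E : Finset (Finset V)} {u : V} :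
    u ∈ (spanned E).verts ↔ ∃ e ∈ E, u ∈ e := by
  simp [spanned, Finset.mem_sup]

theorem spanned_connected_of_chain {e₁ e₂ e₃ : Finset V} {x y : V} (hx₁ : x ∈ e₁) (hy₁ : y ∈ e₁)
    (hy₂ : y ∈ e₂) (hx₃ : x ∈ e₃) : (spanned {e₁, e₂, e₃}).Connected := by
  have reach {e : Finset V} (he : e ∈ ({e₁, e₂, e₃} : Finset (Finset V))) {u v : V}
      (hu : u ∈ e) (hv : v ∈ e) : (spanned {e₁, e₂, e₃}).assoc.Reachable u v :=
    reachable_of_mem_edge _ he hu hv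
  refine connected_of_forall_reachable _ (mem_spanned_verts.2 ⟨e₁, by simp, hy₁⟩) ?_
  intro u hu
  obtain ⟨e, he, hue⟩ := mem_spanned_verts.1 hu
  simp only [Finset.mem_insert, Finset.mem_singleton] at he
  rcases he with rfl | rfl | rfl
  · exact reach (by simp) hue hy₁
  · exact reach (by simp) hue hy₂
  · exact (reach (by simp) hue hx₃).trans (reach (by simp) hx₁ hy₁)

theorem exists_avoidable_of_chain (H : FinHypergraph V) {e₁ e₂ e₃ : Finset V}
    (he₁ : e₁ ∈ H.edges) (he₂ : e₂ ∈ H.edges) (he₃ : e₃ ∈ H.edges)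
    (h₁₂ : e₁ ≠ e₂) (h₁₃ : e₁ ≠ e₃) (h₂₃ : e₂ ≠ e₃) {x y : V} (hx₁ : x ∈ e₁) (hy₁ : y ∈ e₁)
    (hy₂ : y ∈ e₂) (hx₃ : x ∈ e₃) (hcard : (e₁ ∪ e₂ ∪ e₃).card ≤ 5) :
    ∃ C : FinHypergraph V, C.edges ⊆ H.edges ∧ C.verts = C.edges.sup id ∧
      C.Connected ∧ C.edges.card ≤ 6 ∧ 2 ≤ C.nullity1 3 := by
  have hE : ({e₁, e₂, e₃} : Finset (Finset V)).card = 3 :=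
    Finset.card_eq_three.2 ⟨e₁, e₂, e₃, h₁₂, h₁₃, h₂₃, rfl⟩
  refine ⟨spanned {e₁, e₂, e₃}, ?_, rfl, spanned_connected_of_chain hx₁ hy₁ hy₂ hx₃, ?_, ?_⟩
  · simp [spanned, Finset.insert_subset_iff, he₁, he₂, he₃]
  · simp [spanned, hE]
  · have hverts : ((spanned {e₁, e₂, e₃}).verts).card ≤ 5 := by
      simpa [spanned, Finset.union_assoc] using hcard
    simp only [nullity1, spanned, hE] at hverts ⊢
    push_cast
    omega

end FinHypergraph

/-- let `H` be a 3-uniform hypergraph with no avoidable configuration (no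
connected subhypergraph with nullity `≥ 2` and at most `6` hyperedges), and let `G` be the
graph obtained by replacing each hyperedge by a triangle.  If `G` contains a triangle on a
vertex set `h` which is not a hyperedge of `H`, then `H` contains a clean 3-cycle sitting
on `h`: hyperedges `{x,y,a}, {y,z,b}, {z,x,c}` with `h = {x,y,z}` and `x,y,z,a,b,c` all
distinct. -/
theorem stmt_9 {V : Type*} [DecidableEq V] (H : FinHypergraph V) (hu : H.Uniform 3)
    (hav : ¬ ∃ C : FinHypergraph V, C.edges ⊆ H.edges ∧ C.verts = C.edges.sup id ∧
      C.Connected ∧ C.edges.card ≤ 6 ∧ 2 ≤ C.nullity1 3)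
    (h : Finset V) (hcard : h.card = 3) (hnot : h ∉ H.edges)
    (htriangle : ∀ u ∈ h, ∀ v ∈ h, u ≠ v → ∃ e ∈ H.edges, u ∈ e ∧ v ∈ e) :
    ∃ x y z a b c : V, h = {x, y, z} ∧ [x, y, z, a, b, c].Pairwise (· ≠ ·) ∧
      ({x, y, a} : Finset V) ∈ H.edges ∧ ({y, z, b} : Finset V) ∈ H.edges ∧
      ({z, x, c} : Finset V) ∈ H.edges := by
  obtain ⟨x, y, z, hxy, hxz, hyz, rfl⟩ := Finset.card_eq_three.1 hcard
  obtain ⟨a, hax, hay, he₁⟩ :=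
    hu.exists_insert_insert_mem_edges hxy (htriangle x (by simp) y (by simp) hxy)
  obtain ⟨b, -, -, he₂⟩ :=
    hu.exists_insert_insert_mem_edges hyz (htriangle y (by simp) z (by simp) hyz)
  obtain ⟨c, -, -, he₃⟩ :=
    hu.exists_insert_insert_mem_edges hxz.symm (htriangle z (by simp) x (by simp) hxz.symm)
  have haz : a ≠ z := by rintro rfl; exact hnot he₁
  have hbx : b ≠ x := by rintro rfl; exact hnot (by convert he₂ using 1; grind)
  have hcy : c ≠ y := by rintro rfl; exact hnot (by convert he₃ using 1; grind)
  refine ⟨x, y, z, a, b, c, rfl, ?_, he₁, he₂, he₃⟩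
  by_contra hdup
  have hunion : ({x, y, a} ∪ {y, z, b} ∪ {z, x, c} : Finset V) = [x, y, z, a, b, c].toFinset := by
    ext; simp; tauto
  have hcard5 : ({x, y, a} ∪ {y, z, b} ∪ {z, x, c} : Finset V).card ≤ 5 :=
    Nat.le_of_lt_succ (hunion ▸ List.card_toFinset_lt_length_of_not_nodup hdup)
  -- any two of the three hyperedges are told apart by a vertex of `h`
  refine hav (H.exists_avoidable_of_chain he₁ he₂ he₃
    (ne_of_mem_of_not_mem' (a := x) ?_ ?_) (ne_of_mem_of_not_mem' (a := y) ?_ ?_)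
    (ne_of_mem_of_not_mem' (a := y) ?_ ?_) (x := x) (y := y) ?_ ?_ ?_ ?_ hcard5) <;>
    simp [hxy, hxz, hyz, hxy.symm, hax.symm, hay.symm, hbx.symm, hcy.symm]
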